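/- The first moment of P_{η}^{α} is P_{η}^{α}(t; x) = x + (1+α)/η, i.e., exp(−ηx/2)·2^{−α−1}·Σ_{κ=0}^∞ 2^{−κ} L_κ^{(α)}(−ηx/2)·(κ/η) = x + (1+α)/η. -/

import Mathlib

open Real MeasureTheory Filter Set

/-!
Write `z = ηx/2 ≥ 0`. Since `L_κ^{(α)}(-z) = ∑_{i+j=κ} z^i/i! · C(α+κ, j)` and `α > -1`, the series
`∑ κ L_κ^{(α)}(-z) t^κ` for `0 ≤ t < 1` is a double series of nonnegative terms, which may be
summed row by row. Summing over `j` is the negative binomial series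
`∑_j C(β+j-1, j) t^j = (1-t)^{-β}` (with `β = α+i+1`) and its first moment, and then summing over
`i` is the exponential series in `w = zt/(1-t)`. This gives
`∑ κ L_κ^{(α)}(-z) t^κ = (1-t)^{-α-2} e^w (w + (α+1)t)`, which at `t = 1/2` is
`2^{α+1} e^z (2z + α + 1)`.
-/

/-- Generalized Laguerre polynomial `L_κ^{(α)}(x)`. -/
noncomputable def lag (κ : ℕ) (α x : ℝ) : ℝ :=
  ∑ ι ∈ Finset.range (κ + 1),
    (-1 : ℝ) ^ ι / (Nat.factorial ι) *
      ((∏ s ∈ Finset.range (κ - ι), (α + ι + 1 + s)) / (Nat.factorial (κ - ι))) * x ^ ι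
/-- The operators `P_η^α(Φ; x)` based on modified Laguerre polynomials. -/
noncomputable def Pop (η α : ℝ) (Φ : ℝ → ℝ) (x : ℝ) : ℝ :=
  Real.exp (-(η * x) / 2) * (2 : ℝ) ^ (-α - 1) *
    ∑' κ : ℕ, (2 : ℝ) ^ (-(κ : ℝ)) * lag κ α (-(η * x) / 2) * Φ ((κ : ℝ) / η)

open Finset Nat

lemma ascPochhammer_eval_eq_prod_range {R : Type*} [CommSemiring R] (n : ℕ) (r : R) :
    (ascPochhammer R n).eval r = ∏ s ∈ range n, (r + s) := by
  induction n with
  | zero => simp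
  | succ n ih => rw [ascPochhammer_succ_eval, ih, prod_range_succ]

lemma Ring.choose_add_sub_one_eq_prod_div {K : Type*} [Field K] [CharZero K] (β : K) (n : ℕ) :
    Ring.choose (β + n - 1) n = (∏ s ∈ range n, (β + s)) / n ! := by
  rw [Ring.choose_eq_smul, Polynomial.descPochhammer_smeval_eq_ascPochhammer,
    Polynomial.ascPochhammer_smeval_eq_eval, ascPochhammer_eval_eq_prod_range, smul_eq_mul]
  ring_nf

lemma hasSum_natCast_mul_iff_succ {R : Type*} [Ring R] [TopologicalSpace R]
    [IsTopologicalAddGroup R] {f : ℕ → R} {a : R} :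
    HasSum (fun n : ℕ => (n : R) * f n) a ↔ HasSum (fun n : ℕ => ((n : R) + 1) * f (n + 1)) a := by
  rw [← hasSum_nat_add_iff' 1]
  simp

lemma Real.hasSum_natCast_mul_pow_div_factorial (z : ℝ) :
    HasSum (fun n : ℕ => (n : ℝ) * (z ^ n / n !)) (z * exp z) := by
  rw [hasSum_natCast_mul_iff_succ, exp_eq_exp_ℝ]
  refine ((NormedSpace.expSeries_div_hasSum_exp z).mul_left z).congr_fun fun n => ?_
  rw [factorial_succ, cast_mul, pow_succ]
  field_simp
  push_cast
  ring

theorem hasSum_prod_add_div_factorial_mul_pow {t : ℝ} (β : ℝ) (ht : |t| < 1) :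
    HasSum (fun n : ℕ => (∏ s ∈ range n, (β + s)) / n ! * t ^ n) ((1 - t) ^ (-β)) := by
  have h := (Real.one_div_one_sub_rpow_hasFPowerSeriesOnBall_zero β).hasSum (y := t)
    (by simpa [Metric.eball, edist_dist, Real.dist_eq] using ht)
  simp only [FormalMultilinearSeries.ofScalars_apply_eq, zero_add, smul_eq_mul] at h
  rw [rpow_neg (by linarith [abs_lt.mp ht]), ← one_div]
  refine h.congr_fun fun n => ?_
  rw [Ring.choose_add_sub_one_eq_prod_div, mul_comm]

theorem hasSum_natCast_mul_prod_add_div_factorial_mul_pow {t : ℝ} (β : ℝ) (ht : |t| < 1) :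
    HasSum (fun n : ℕ => (n : ℝ) * ((∏ s ∈ range n, (β + s)) / n ! * t ^ n))
      (β * t * (1 - t) ^ (-β - 1)) := by
  rw [hasSum_natCast_mul_iff_succ, show -β - 1 = -(β + 1) by ring]
  refine ((hasSum_prod_add_div_factorial_mul_pow (β + 1) ht).mul_left (β * t)).congr_fun
    fun n => ?_
  rw [prod_range_succ', factorial_succ, cast_mul, pow_succ]
  field_simp
  push_cast
  ring_nf

theorem HasSum.sum_antidiagonal_of_nonneg {F : ℕ × ℕ → ℝ} (hF : 0 ≤ F) {A : ℕ → ℝ} {T : ℝ}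
    (hrow : ∀ i, HasSum (fun j => F (i, j)) (A i)) (hA : HasSum A T) :
    HasSum (fun n => ∑ p ∈ antidiagonal n, F p) T := by
  have hsum : Summable F := (summable_prod_of_nonneg hF).mpr
    ⟨fun i => (hrow i).summable, hA.summable.congr fun i => ((hrow i).tsum_eq).symm⟩
  have hF_T : HasSum F T := by
    rw [hA.unique (hsum.hasSum.prod_fiberwise hrow)]
    exact hsum.hasSum
  refine (HasAntidiagonal.sigmaAntidiagonalEquivProd.hasSum_iff.mpr hF_T).sigma fun n => ?_
  exact (antidiagonal n).hasSum F

/-- `z^i / i!` times the binomial coefficient `C(α + i + j, j)`. -/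
noncomputable def lagTerm (α z : ℝ) (p : ℕ × ℕ) : ℝ :=
  z ^ p.1 / p.1 ! * ((∏ s ∈ range p.2, (α + p.1 + 1 + s)) / p.2 !)

lemma lag_neg_eq_sum_antidiagonal (κ : ℕ) (α z : ℝ) :
    lag κ α (-z) = ∑ p ∈ antidiagonal κ, lagTerm α z p := by
  rw [Nat.sum_antidiagonal_eq_sum_range_succ_mk, lag]
  refine sum_congr rfl fun i _ => ?_
  have hsq : (-1 : ℝ) ^ i * (-1) ^ i = 1 := by rw [← mul_pow]; norm_num
  rw [neg_pow z, lagTerm]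
  linear_combination (z ^ i / i ! * ((∏ s ∈ range (κ - i), (α + i + 1 + s)) / (κ - i) !)) * hsq

lemma lagTerm_nonneg {α z : ℝ} (hα : -1 < α) (hz : 0 ≤ z) (p : ℕ × ℕ) : 0 ≤ lagTerm α z p := by
  have : 0 ≤ ∏ s ∈ range p.2, (α + p.1 + 1 + s) :=
    prod_nonneg fun s _ => by linarith [(p.1.cast_nonneg : (0 : ℝ) ≤ p.1), s.cast_nonneg (α := ℝ)]
  unfold lagTerm
  positivity

theorem hasSum_lagTerm_mul_pow_mul (α z : ℝ) {t : ℝ} (ht : |t| < 1) (i : ℕ) :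
    HasSum (fun j => lagTerm α z (i, j) * t ^ (i + j) * (i + j : ℕ))
      ((1 - t) ^ (-α - 2) *
        (i * ((z * t / (1 - t)) ^ i / i !) + (α + 1) * t * ((z * t / (1 - t)) ^ i / i !))) := by
  have hu : 0 < 1 - t := by linarith [abs_lt.mp ht]
  have hpow : (1 - t) ^ (-(α + i + 1) - 1) = (1 - t) ^ (-α - 2) * ((1 - t) ^ i)⁻¹ := by
    rw [show -(α + i + 1) - 1 = (-α - 2) + -(i : ℝ) by ring, rpow_add hu, rpow_neg hu.le,
      rpow_natCast]
  have hpow' : (1 - t) ^ (-(α + i + 1)) = (1 - t) ^ (-(α + i + 1) - 1) * (1 - t) := by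
    rw [← rpow_add_one hu.ne']
    ring_nf
  have hval : z ^ i / i ! * t ^ i * (i * (1 - t) ^ (-(α + i + 1)) +
      (α + i + 1) * t * (1 - t) ^ (-(α + i + 1) - 1)) =
      (1 - t) ^ (-α - 2) *
        (i * ((z * t / (1 - t)) ^ i / i !) + (α + 1) * t * ((z * t / (1 - t)) ^ i / i !)) := by
    rw [hpow', hpow, div_pow, mul_pow]
    field_simp
    ring
  rw [← hval]
  refine ((((hasSum_prod_add_div_factorial_mul_pow (α + i + 1) ht).mul_left (i : ℝ)).add
    (hasSum_natCast_mul_prod_add_div_factorial_mul_pow (α + i + 1) ht)).mul_left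
      (z ^ i / i ! * t ^ i)).congr_fun fun j => ?_
  rw [lagTerm]
  push_cast
  ring

theorem hasSum_natCast_mul_lag_neg_mul_pow {α z t : ℝ} (hα : -1 < α) (hz : 0 ≤ z)
    (ht₀ : 0 ≤ t) (ht₁ : t < 1) :
    HasSum (fun κ : ℕ => κ * lag κ α (-z) * t ^ κ)
      ((1 - t) ^ (-α - 2) * (exp (z * t / (1 - t)) * (z * t / (1 - t) + (α + 1) * t))) := by
  have hrows := hasSum_lagTerm_mul_pow_mul α z (abs_lt.mpr ⟨by linarith, ht₁⟩)
  set w := z * t / (1 - t)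
  have hcols := (((Real.hasSum_natCast_mul_pow_div_factorial w).add
    ((NormedSpace.expSeries_div_hasSum_exp w).mul_left ((α + 1) * t))).mul_left ((1 - t) ^ (-α - 2)))
  rw [← exp_eq_exp_ℝ] at hcols
  rw [show exp w * (w + (α + 1) * t) = w * exp w + (α + 1) * t * exp w by ring]
  refine (HasSum.sum_antidiagonal_of_nonneg
    (F := fun p => lagTerm α z p * t ^ (p.1 + p.2) * (p.1 + p.2 : ℕ)) (fun p => ?_) hrows
      hcols).congr_fun fun κ => ?_
  · have := lagTerm_nonneg hα hz p
    positivity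
  rw [lag_neg_eq_sum_antidiagonal, mul_sum, sum_mul]
  refine sum_congr rfl fun p hp => ?_
  rw [HasAntidiagonal.mem_antidiagonal] at hp
  simp only [hp]
  ring

/-- The first moment of `P_η^α`. -/
theorem stmt4 (α η x : ℝ) (hα : -1 < α) (hη : 0 < η) (hx : 0 ≤ x) :
    Pop η α (fun t => t) x = x + (1 + α) / η := by
  set z := η * x / 2 with hz
  have hsum := (hasSum_natCast_mul_lag_neg_mul_pow hα (by positivity : 0 ≤ z)
    (t := 2⁻¹) (by norm_num) (by norm_num)).div_const η
  have hterm : ∀ κ : ℕ, (2 : ℝ) ^ (-(κ : ℝ)) * lag κ α (-(η * x) / 2) * (κ / η) =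
      κ * lag κ α (-z) * 2⁻¹ ^ κ / η := fun κ => by
    rw [rpow_neg two_pos.le, rpow_natCast, inv_pow, neg_div]
    ring
  have hpow : (2 : ℝ) ^ (-α - 1) * (1 - 2⁻¹) ^ (-α - 2) = 2 := by
    rw [show (1 : ℝ) - 2⁻¹ = 2⁻¹ by norm_num, inv_rpow two_pos.le, ← rpow_neg two_pos.le,
      ← rpow_add two_pos, show -α - 1 + -(-α - 2) = 1 by ring, rpow_one]
  have hexp : exp (-z) * exp z = 1 := by rw [← exp_add, neg_add_cancel, exp_zero]
  rw [Pop, tsum_congr hterm, hsum.tsum_eq, neg_div, ← hz,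
    show z * 2⁻¹ / (1 - 2⁻¹) = z by norm_num]
  calc exp (-z) * 2 ^ (-α - 1) * ((1 - 2⁻¹) ^ (-α - 2) * (exp z * (z + (α + 1) * 2⁻¹)) / η)
      = (2 ^ (-α - 1) * (1 - 2⁻¹) ^ (-α - 2)) * (exp (-z) * exp z) * (z + (α + 1) * 2⁻¹) / η := by
        ring
    _ = x + (1 + α) / η := by
        rw [hpow, hexp, hz]
        field_simp
        ring
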